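/- arXiv:1006.1917 — 4 statements merged into one kernel-verified Lean document; each statement's English description precedes it below -/
import Mathlib

section
/- Let Q be a quiver and let C and C' be subsets of Q₁. Then the following are equivalent: (a) C and C' are compatible, i.e. g_C(p) = g_{C'}(p) for every cyclic walk p in Q; (b) there exists an isomorphism of quivers f: ℤ(Q,C) → ℤ(Q,C') such that π ∘ f = π and f ∘ τ = τ ∘ f. -/
/-- A quiver given by a (finite) set of vertices `V`, a set of arrows `A`,
and source/target maps `s`, `t`. -/
structure PreQuiver where
  V : Type
  A : Type
  s : A → V
  t : A → V

namespace PreQuiver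

variable (Q : PreQuiver)

/-- A step of a walk: an arrow of the double quiver, i.e. an arrow of `Q`
together with an orientation (`true` = the arrow itself, `false` = its formal inverse). -/
abbrev Step := Q.A × Bool

/-- The source of a step in the double quiver. -/
def stepSrc (e : Q.Step) : Q.V := if e.2 then Q.s e.1 else Q.t e.1

/-- The target of a step in the double quiver. -/
def stepTgt (e : Q.Step) : Q.V := if e.2 then Q.t e.1 else Q.s e.1

/-- `Q.IsWalk x y l` : the list of steps `l` is a walk from `x` to `y`
(i.e. a path in the double quiver). -/
def IsWalk : Q.V → Q.V → List Q.Step → Prop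
  | x, y, [] => x = y
  | x, y, e :: l => Q.stepSrc e = x ∧ IsWalk (Q.stepTgt e) y l

/-- `Q.IsPath x y l` : the list of arrows `l` is a path of arrows from `x` to `y`. -/
def IsPath : Q.V → Q.V → List Q.A → Prop
  | x, y, [] => x = y
  | x, y, a :: l => Q.s a = x ∧ IsPath (Q.t a) y l

/-- The degree `g_C(a)` of an arrow: `1` if `a ∈ C` and `0` otherwise. -/
noncomputable def gA (C : Set Q.A) (a : Q.A) : ℤ :=
  haveI := Classical.propDecidable (a ∈ C)
  if a ∈ C then 1 else 0

/-- The degree of a step: `g_C(a)` for `a` and `-g_C(a)` for `a⁻¹`. -/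
noncomputable def gStep (C : Set Q.A) (e : Q.Step) : ℤ :=
  if e.2 then Q.gA C e.1 else -Q.gA C e.1

/-- The degree `g_C(p)` of a walk, extended additively. -/
noncomputable def gWalk (C : Set Q.A) (l : List Q.Step) : ℤ := (l.map (Q.gStep C)).sum

/-- The degree `g_C(p)` of a path of arrows. -/
noncomputable def gPath (C : Set Q.A) (l : List Q.A) : ℤ := (l.map (Q.gA C)).sum

/-- Two sets of arrows are compatible if they give every cyclic walk the same degree. -/
def Compatible (C C' : Set Q.A) : Prop :=
  ∀ (x : Q.V) (l : List Q.Step), Q.IsWalk x x l → Q.gWalk C l = Q.gWalk C' l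

/-- A quiver is connected if any two vertices are joined by a walk. -/
def Connected : Prop := ∀ x y : Q.V, ∃ l : List Q.Step, Q.IsWalk x y l

/-- The covering quiver `ℤ(Q,C)`: vertices `Q₀ × ℤ`; for an arrow `a : x → y` and `ℓ ∈ ℤ`,
an arrow `(a,ℓ) : (x,ℓ) → (y,ℓ)` if `a ∉ C` and `(a,ℓ) : (x,ℓ) → (y,ℓ-1)` if `a ∈ C`. -/
noncomputable def cover (C : Set Q.A) : PreQuiver where
  V := Q.V × ℤ
  A := Q.A × ℤ
  s := fun e => (Q.s e.1, e.2)
  t := fun e => (Q.t e.1, e.2 - Q.gA C e.1)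

end PreQuiver

/-- An isomorphism of quivers: bijections on vertices and arrows commuting with
source and target maps. -/
structure QuivIso (Q₁ Q₂ : PreQuiver) where
  onV : Q₁.V ≃ Q₂.V
  onA : Q₁.A ≃ Q₂.A
  map_s : ∀ a : Q₁.A, Q₂.s (onA a) = onV (Q₁.s a)
  map_t : ∀ a : Q₁.A, Q₂.t (onA a) = onV (Q₁.t a)

/-! Both conditions say that `g_C - g_{C'}` is the coboundary of a potential `h : Q₀ → ℤ`,
i.e. `g_C(a) - g_{C'}(a) = h(e(a)) - h(s(a))` for every arrow `a`. For (a), fix a base point in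
every connected component and let `h(x)` be the degree difference along any walk from the base
point to `x`, which compatibility makes independent of the walk. For (b), `f` has to send
`(x, ℓ)` to `(x, ℓ + h(x))`, and commuting with source and target is exactly the coboundary
equation. -/

namespace PreQuiver

variable (Q : PreQuiver)

def stepInv (e : Q.Step) : Q.Step := (e.1, !e.2)

def walkInv (l : List Q.Step) : List Q.Step := l.reverse.map Q.stepInv

def Reachable (x y : Q.V) : Prop := ∃ l, Q.IsWalk x y l

def IsPotential (C C' : Set Q.A) (h : Q.V → ℤ) : Prop :=
  ∀ a : Q.A, Q.gA C a - Q.gA C' a = h (Q.t a) - h (Q.s a)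

variable {Q}

@[simp] lemma stepSrc_stepInv (e : Q.Step) : Q.stepSrc (Q.stepInv e) = Q.stepTgt e := by
  rcases e with ⟨a, _ | _⟩ <;> rfl

@[simp] lemma stepTgt_stepInv (e : Q.Step) : Q.stepTgt (Q.stepInv e) = Q.stepSrc e := by
  rcases e with ⟨a, _ | _⟩ <;> rfl

@[simp] lemma gStep_stepInv (C : Set Q.A) (e : Q.Step) :
    Q.gStep C (Q.stepInv e) = -Q.gStep C e := by
  rcases e with ⟨a, _ | _⟩ <;> simp [stepInv, gStep]

lemma isWalk_arrow (a : Q.A) : Q.IsWalk (Q.s a) (Q.t a) [(a, true)] :=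
  ⟨rfl, rfl⟩

lemma IsWalk.append {x y z : Q.V} {l m : List Q.Step}
    (hl : Q.IsWalk x y l) (hm : Q.IsWalk y z m) : Q.IsWalk x z (l ++ m) := by
  induction l generalizing x with
  | nil => cases hl; exact hm
  | cons e l ih => exact ⟨hl.1, ih hl.2⟩

lemma IsWalk.walkInv {x y : Q.V} {l : List Q.Step} (hl : Q.IsWalk x y l) :
    Q.IsWalk y x (Q.walkInv l) := by
  induction l generalizing x with
  | nil => cases hl; rfl
  | cons e l ih =>
    simp only [PreQuiver.walkInv, List.reverse_cons, List.map_append, List.map_cons,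
      List.map_nil] at ih ⊢
    exact (ih hl.2).append ⟨stepSrc_stepInv e, (stepTgt_stepInv e).trans hl.1⟩

@[simp] lemma gWalk_cons (C : Set Q.A) (e : Q.Step) (l : List Q.Step) :
    Q.gWalk C (e :: l) = Q.gStep C e + Q.gWalk C l := by
  simp [gWalk]

@[simp] lemma gWalk_append (C : Set Q.A) (l m : List Q.Step) :
    Q.gWalk C (l ++ m) = Q.gWalk C l + Q.gWalk C m := by
  simp [gWalk]

@[simp] lemma gWalk_arrow (C : Set Q.A) (a : Q.A) : Q.gWalk C [(a, true)] = Q.gA C a := by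
  simp [gWalk, gStep]

@[simp] lemma gWalk_walkInv (C : Set Q.A) (l : List Q.Step) :
    Q.gWalk C (Q.walkInv l) = -Q.gWalk C l := by
  induction l with
  | nil => rfl
  | cons e l ih =>
    simp only [walkInv, List.reverse_cons, List.map_append, List.map_cons, List.map_nil] at ih ⊢
    rw [gWalk_append, ih, gWalk_cons, gWalk_cons, gStep_stepInv]
    simp [gWalk]

lemma reachable_equivalence : Equivalence Q.Reachable where
  refl _ := ⟨[], rfl⟩
  symm := fun ⟨_, hl⟩ => ⟨_, hl.walkInv⟩
  trans := fun ⟨_, hl⟩ ⟨_, hm⟩ => ⟨_, hl.append hm⟩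

def reachableSetoid : Setoid Q.V := ⟨Q.Reachable, reachable_equivalence⟩

lemma IsPotential.gWalk_sub {C C' : Set Q.A} {h : Q.V → ℤ} (hh : Q.IsPotential C C' h)
    {x y : Q.V} {l : List Q.Step} (hl : Q.IsWalk x y l) :
    Q.gWalk C l - Q.gWalk C' l = h y - h x := by
  induction l generalizing x with
  | nil => cases hl; simp [gWalk]
  | cons e l ih =>
    obtain ⟨rfl, hl⟩ := hl
    have hstep : Q.gStep C e - Q.gStep C' e = h (Q.stepTgt e) - h (Q.stepSrc e) := by
      rcases e with ⟨a, _ | _⟩ <;>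
        simp only [gStep, stepSrc, stepTgt, Bool.false_eq_true, if_true, if_false] <;>
        linarith [hh a]
    rw [gWalk_cons, gWalk_cons]
    linarith [ih hl]

lemma IsPotential.compatible {C C' : Set Q.A} {h : Q.V → ℤ} (hh : Q.IsPotential C C' h) :
    Q.Compatible C C' := fun _ _ hl => by
  linarith [hh.gWalk_sub hl]

lemma Compatible.gWalk_sub_eq {C C' : Set Q.A} (hc : Q.Compatible C C') {x y : Q.V}
    {l m : List Q.Step} (hl : Q.IsWalk x y l) (hm : Q.IsWalk x y m) :
    Q.gWalk C l - Q.gWalk C' l = Q.gWalk C m - Q.gWalk C' m := by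
  have := hc x _ (hl.append hm.walkInv)
  simp only [gWalk_append, gWalk_walkInv] at this
  linarith

lemma Compatible.exists_isPotential {C C' : Set Q.A} (hc : Q.Compatible C C') :
    ∃ h, Q.IsPotential C C' h := by
  let base : Q.V → Q.V := fun x => (Quotient.mk reachableSetoid x).out
  have hbase (x : Q.V) : Q.Reachable (base x) x := Quotient.mk_out (s := reachableSetoid) x
  refine ⟨fun x => Q.gWalk C (hbase x).choose - Q.gWalk C' (hbase x).choose, fun a => ?_⟩
  have hsame : base (Q.s a) = base (Q.t a) :=
    congrArg Quotient.out (Quotient.sound (s := reachableSetoid) ⟨_, isWalk_arrow a⟩)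
  have hwalk : Q.IsWalk (base (Q.t a)) (Q.t a) ((hbase (Q.s a)).choose ++ [(a, true)]) :=
    hsame ▸ (hbase (Q.s a)).choose_spec.append (isWalk_arrow a)
  have := hc.gWalk_sub_eq hwalk (hbase (Q.t a)).choose_spec
  simp only [gWalk_append, gWalk_arrow] at this
  dsimp only
  linarith

noncomputable def IsPotential.coverIso {C C' : Set Q.A} {h : Q.V → ℤ}
    (hh : Q.IsPotential C C' h) : QuivIso (Q.cover C) (Q.cover C') where
  onV := (Equiv.refl Q.V).prodShear fun x => Equiv.addRight (h x)
  onA := (Equiv.refl Q.A).prodShear fun a => Equiv.addRight (h (Q.s a))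
  map_s _ := rfl
  map_t a := Prod.ext rfl <| by
    change a.2 + h (Q.s a.1) - Q.gA C' a.1 = a.2 - Q.gA C a.1 + h (Q.t a.1)
    linarith [hh a.1]

end PreQuiver

lemma Int.apply_eq_add_apply_zero {g : ℤ → ℤ} (hg : ∀ n, g (n + 1) = g n + 1) (n : ℤ) :
    g n = n + g 0 := by
  induction n using Int.induction_on with
  | zero => simp
  | succ n ih => rw [hg, ih]; ring
  | pred n ih =>
    have := hg (-n - 1)
    rw [sub_add_cancel, ih] at this
    linarith

namespace QuivIso

variable {Q : PreQuiver} {C C' : Set Q.A} (f : QuivIso (Q.cover C) (Q.cover C'))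

lemma onV_eq (hV : ∀ v : Q.V × ℤ, (f.onV v).1 = v.1)
    (hτ : ∀ v : Q.V × ℤ, f.onV (v.1, v.2 + 1) = ((f.onV v).1, (f.onV v).2 + 1))
    (x : Q.V) (ℓ : ℤ) : f.onV (x, ℓ) = (x, ℓ + (f.onV (x, 0)).2) :=
  Prod.ext (hV _) <|
    Int.apply_eq_add_apply_zero (g := fun ℓ => (f.onV (x, ℓ)).2)
      (fun n => congrArg Prod.snd (hτ (x, n))) ℓ

lemma isPotential (hV : ∀ v : Q.V × ℤ, (f.onV v).1 = v.1)
    (hA : ∀ e : Q.A × ℤ, (f.onA e).1 = e.1)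
    (hτ : ∀ v : Q.V × ℤ, f.onV (v.1, v.2 + 1) = ((f.onV v).1, (f.onV v).2 + 1)) :
    Q.IsPotential C C' fun x => (f.onV (x, 0)).2 := fun a => by
  have hs : (f.onA (a, 0)).2 = (f.onV (Q.s a, 0)).2 := congrArg Prod.snd (f.map_s (a, 0))
  have ht : (f.onA (a, 0)).2 - Q.gA C' (f.onA (a, 0)).1 = (f.onV (Q.t a, 0 - Q.gA C a)).2 :=
    congrArg Prod.snd (f.map_t (a, 0))
  rw [hA, f.onV_eq hV hτ (Q.t a)] at ht
  dsimp only at ht ⊢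
  linarith

end QuivIso

theorem stmt_3_general (Q : PreQuiver) (C C' : Set Q.A) :
    Q.Compatible C C' ↔
      ∃ f : QuivIso (Q.cover C) (Q.cover C'),
        (∀ v : Q.V × ℤ, (f.onV v).1 = v.1) ∧
        (∀ e : Q.A × ℤ, (f.onA e).1 = e.1) ∧
        (∀ v : Q.V × ℤ, f.onV (v.1, v.2 + 1) = ((f.onV v).1, (f.onV v).2 + 1)) ∧
        (∀ e : Q.A × ℤ, f.onA (e.1, e.2 + 1) = ((f.onA e).1, (f.onA e).2 + 1)) := by
  constructor
  · intro hc
    obtain ⟨h, hh⟩ := hc.exists_isPotential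
    refine ⟨hh.coverIso, fun _ => rfl, fun _ => rfl, fun _ => ?_, fun _ => ?_⟩ <;>
      exact Prod.ext rfl (add_right_comm _ _ _)
  · rintro ⟨f, hV, hA, hτ, -⟩
    exact (f.isPotential hV hA hτ).compatible

/-- For subsets `C, C' ⊆ Q₁` the following are equivalent:
(a) `C` and `C'` are compatible (`g_C(p) = g_{C'}(p)` for every cyclic walk `p`);
(b) there is an isomorphism of quivers `f : ℤ(Q,C) → ℤ(Q,C')` with `π ∘ f = π`
and `f ∘ τ = τ ∘ f` (on vertices and on arrows). -/
theorem stmt_3 (Q : PreQuiver) [Finite Q.V] [Finite Q.A] (C C' : Set Q.A) :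
    Q.Compatible C C' ↔
      ∃ f : QuivIso (Q.cover C) (Q.cover C'),
        (∀ v : Q.V × ℤ, (f.onV v).1 = v.1) ∧
        (∀ e : Q.A × ℤ, (f.onA e).1 = e.1) ∧
        (∀ v : Q.V × ℤ, f.onV (v.1, v.2 + 1) = ((f.onV v).1, (f.onV v).2 + 1)) ∧
        (∀ e : Q.A × ℤ, f.onA (e.1, e.2 + 1) = ((f.onA e).1, (f.onA e).2 + 1)) :=
  stmt_3_general Q C C'
end

section
/- Let Q be a quiver, C ⊆ Q₁, and let x be a strict source of (Q,C). Then the cut-mutation μ⁺ₓ(C) is compatible with C, the vertex x is a strict sink of (Q, μ⁺ₓ(C)), and μ⁻ₓ(μ⁺ₓ(C)) = C. Dually, if x is a strict sink of (Q,C), then μ⁻ₓ(C) is compatible with C, x is a strict source of (Q, μ⁻ₓ(C)), and μ⁺ₓ(μ⁻ₓ(C)) = C. -/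
namespace PreQuiver

variable (Q : PreQuiver)

/-- `x` is a strict source of `(Q,C)`: every arrow ending at `x` belongs to `C` and
every arrow starting at `x` does not belong to `C`. -/
def IsStrictSource (C : Set Q.A) (x : Q.V) : Prop :=
  (∀ a : Q.A, Q.t a = x → a ∈ C) ∧ ∀ a : Q.A, Q.s a = x → a ∉ C

/-- `x` is a strict sink of `(Q,C)`: every arrow starting at `x` belongs to `C` and
every arrow ending at `x` does not belong to `C`. -/
def IsStrictSink (C : Set Q.A) (x : Q.V) : Prop :=
  (∀ a : Q.A, Q.s a = x → a ∈ C) ∧ ∀ a : Q.A, Q.t a = x → a ∉ C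

/-- The cut-mutation `μ⁺ₓ(C)`: remove from `C` all arrows ending at `x` and add all arrows
starting at `x`. -/
def mutPlus (C : Set Q.A) (x : Q.V) : Set Q.A :=
  (C \ {a : Q.A | Q.t a = x}) ∪ {a : Q.A | Q.s a = x}

/-- The cut-mutation `μ⁻ₓ(C)`: remove from `C` all arrows starting at `x` and add all arrows
ending at `x`. -/
def mutMinus (C : Set Q.A) (x : Q.V) : Set Q.A :=
  (C \ {a : Q.A | Q.s a = x}) ∪ {a : Q.A | Q.t a = x}

end PreQuiver

/-!
At a strict source `x`, passing from `C` to `μ⁺ₓ(C)` raises the degree of every arrow leaving `x`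
by one and lowers that of every arrow entering `x` by one (there is no loop at `x`, as it would
have to lie both in and outside `C`). So `g_{μ⁺ₓ(C)} - g_C` is the coboundary of the indicator of
`x`, which telescopes to zero along any cyclic walk. The sink case is dual, and the remaining
claims are set bookkeeping.
-/

namespace PreQuiver

variable (Q : PreQuiver)

theorem gWalk_sub_gWalk_of_isWalk {C C' : Set Q.A} (φ : Q.V → ℤ)
    (h : ∀ a, Q.gA C' a - Q.gA C a = φ (Q.s a) - φ (Q.t a)) {u v : Q.V} {l : List Q.Step}
    (hl : Q.IsWalk u v l) : Q.gWalk C' l - Q.gWalk C l = φ u - φ v := by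
  induction l generalizing u with
  | nil => simp_all [IsWalk, gWalk]
  | cons e l ih =>
    obtain ⟨rfl, hl⟩ := hl
    have ih := ih hl
    have ha := h e.1
    rcases e with ⟨a, _ | _⟩ <;>
      simp only [gWalk, List.map_cons, List.sum_cons, gStep, stepSrc, stepTgt,
        Bool.false_eq_true, ↓reduceIte] at ih ha ⊢ <;> linarith

theorem compatible_of_gA_sub_eq {C C' : Set Q.A} (φ : Q.V → ℤ)
    (h : ∀ a, Q.gA C' a - Q.gA C a = φ (Q.s a) - φ (Q.t a)) : Q.Compatible C C' :=
  fun _ _ hl => by linarith [Q.gWalk_sub_gWalk_of_isWalk φ h hl]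

variable {Q} {C : Set Q.A} {x : Q.V}

namespace IsStrictSource

theorem isStrictSink_mutPlus (hx : Q.IsStrictSource C x) :
    Q.IsStrictSink (Q.mutPlus C x) x := by
  refine ⟨fun a hs => Or.inr hs, fun a ht => ?_⟩
  rintro (⟨-, hnt⟩ | hs)
  exacts [hnt ht, hx.2 a hs (hx.1 a ht)]

theorem mutMinus_mutPlus (hx : Q.IsStrictSource C x) :
    Q.mutMinus (Q.mutPlus C x) x = C := by
  ext a
  have := hx.1 a
  have := hx.2 a
  simp only [mutMinus, mutPlus, Set.mem_union, Set.mem_sdiff, Set.mem_ofPred_eq]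
  tauto

open Classical in
theorem gA_mutPlus_sub_gA (hx : Q.IsStrictSource C x) (a : Q.A) :
    Q.gA (Q.mutPlus C x) a - Q.gA C a =
      (if Q.s a = x then 1 else 0) - (if Q.t a = x then 1 else 0) := by
  have := hx.1 a
  have := hx.2 a
  simp only [gA, mutPlus, Set.mem_union, Set.mem_sdiff, Set.mem_ofPred_eq]
  split_ifs <;> simp_all

open Classical in
theorem compatible_mutPlus (hx : Q.IsStrictSource C x) : Q.Compatible C (Q.mutPlus C x) :=
  Q.compatible_of_gA_sub_eq (fun v => if v = x then 1 else 0) hx.gA_mutPlus_sub_gA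

end IsStrictSource

namespace IsStrictSink

theorem isStrictSource_mutMinus (hx : Q.IsStrictSink C x) :
    Q.IsStrictSource (Q.mutMinus C x) x := by
  refine ⟨fun a ht => Or.inr ht, fun a hs => ?_⟩
  rintro (⟨-, hns⟩ | ht)
  exacts [hns hs, hx.2 a ht (hx.1 a hs)]

theorem mutPlus_mutMinus (hx : Q.IsStrictSink C x) :
    Q.mutPlus (Q.mutMinus C x) x = C := by
  ext a
  have := hx.1 a
  have := hx.2 a
  simp only [mutMinus, mutPlus, Set.mem_union, Set.mem_sdiff, Set.mem_ofPred_eq]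
  tauto

open Classical in
theorem gA_mutMinus_sub_gA (hx : Q.IsStrictSink C x) (a : Q.A) :
    Q.gA (Q.mutMinus C x) a - Q.gA C a =
      (if Q.s a = x then -1 else 0) - (if Q.t a = x then -1 else 0) := by
  have := hx.1 a
  have := hx.2 a
  simp only [gA, mutMinus, Set.mem_union, Set.mem_sdiff, Set.mem_ofPred_eq]
  split_ifs <;> simp_all

open Classical in
theorem compatible_mutMinus (hx : Q.IsStrictSink C x) : Q.Compatible C (Q.mutMinus C x) :=
  Q.compatible_of_gA_sub_eq (fun v => if v = x then -1 else 0) hx.gA_mutMinus_sub_gA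

end IsStrictSink

end PreQuiver

theorem stmt_5_general (Q : PreQuiver) (C : Set Q.A) (x : Q.V) :
    (Q.IsStrictSource C x →
      Q.Compatible C (Q.mutPlus C x) ∧
      Q.IsStrictSink (Q.mutPlus C x) x ∧
      Q.mutMinus (Q.mutPlus C x) x = C) ∧
    (Q.IsStrictSink C x →
      Q.Compatible C (Q.mutMinus C x) ∧
      Q.IsStrictSource (Q.mutMinus C x) x ∧
      Q.mutPlus (Q.mutMinus C x) x = C) :=
  ⟨fun hx => ⟨hx.compatible_mutPlus, hx.isStrictSink_mutPlus, hx.mutMinus_mutPlus⟩,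
    fun hx => ⟨hx.compatible_mutMinus, hx.isStrictSource_mutMinus, hx.mutPlus_mutMinus⟩⟩

/-- If `x` is a strict source of `(Q,C)`, then `μ⁺ₓ(C)` is compatible with `C`,
`x` is a strict sink of `(Q, μ⁺ₓ(C))`, and `μ⁻ₓ(μ⁺ₓ(C)) = C`.  Dually, if `x` is a strict sink
of `(Q,C)`, then `μ⁻ₓ(C)` is compatible with `C`, `x` is a strict source of `(Q, μ⁻ₓ(C))`, and
`μ⁺ₓ(μ⁻ₓ(C)) = C`. -/
theorem stmt_5 (Q : PreQuiver) [Finite Q.V] [Finite Q.A] (C : Set Q.A) (x : Q.V) :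
    (Q.IsStrictSource C x →
      Q.Compatible C (Q.mutPlus C x) ∧
      Q.IsStrictSink (Q.mutPlus C x) x ∧
      Q.mutMinus (Q.mutPlus C x) x = C) ∧
    (Q.IsStrictSink C x →
      Q.Compatible C (Q.mutMinus C x) ∧
      Q.IsStrictSource (Q.mutMinus C x) x ∧
      Q.mutPlus (Q.mutMinus C x) x = C) :=
  stmt_5_general Q C x
end

section
/- Let (Q,C) be a truncated quiver, S a slice of ℤ(Q,C), and x a strict source of S. Then the slice-mutation μ⁺ₓ(S) is again a slice of ℤ(Q,C), the vertex τ⁻¹x is a strict sink of μ⁺ₓ(S), and μ⁻_{τ⁻¹x}(μ⁺ₓ(S)) = S. Dually, if x is a strict sink of S, then μ⁻ₓ(S) is again a slice, τx is a strict source of μ⁻ₓ(S), and μ⁺_{τx}(μ⁻ₓ(S)) = S. -/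
namespace PreQuiver

variable (Q : PreQuiver)

/-- The arrows of the full subquiver of `ℤ(Q,C)` on a set `S` of vertices:
those arrows with both endpoints in `S`. -/
noncomputable def sliceArrows (C : Set Q.A) (S : Set (Q.V × ℤ)) : Set (Q.A × ℤ) :=
  {e : Q.A × ℤ | (Q.cover C).s e ∈ S ∧ (Q.cover C).t e ∈ S}

/-- `S` determines a slice of `ℤ(Q,C)`: every `τ`-orbit of vertices meets `S` exactly once, and
for every arrow of `ℤ(Q,C)` starting in `S` the target lies in `S ∪ τ⁻¹S`. -/
noncomputable def IsSlice (C : Set Q.A) (S : Set (Q.V × ℤ)) : Prop :=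
  (∀ x : Q.V, ∃! ℓ : ℤ, (x, ℓ) ∈ S) ∧
  ∀ e : Q.A × ℤ, (Q.cover C).s e ∈ S →
    ((Q.cover C).t e ∈ S ∨ (((Q.cover C).t e).1, ((Q.cover C).t e).2 + 1) ∈ S)

/-- The cut `C_S := Q₁ \ π(S₁)` associated with a slice `S`. -/
noncomputable def cutOf (C : Set Q.A) (S : Set (Q.V × ℤ)) : Set Q.A :=
  {a : Q.A | a ∉ (fun e : Q.A × ℤ => e.1) '' Q.sliceArrows C S}

end PreQuiver

namespace PreQuiver

variable (Q : PreQuiver)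

/-- `x` is a strict source of the slice `S`: `x ∈ S₀`, no arrow of `ℤ(Q,C)` ending at `x`
belongs to (the arrows of) `S`, and every arrow of `ℤ(Q,C)` starting at `x` belongs to `S`. -/
noncomputable def SliceStrictSource (C : Set Q.A) (S : Set (Q.V × ℤ)) (x : Q.V × ℤ) : Prop :=
  x ∈ S ∧ (∀ e : Q.A × ℤ, (Q.cover C).t e = x → e ∉ Q.sliceArrows C S) ∧
    ∀ e : Q.A × ℤ, (Q.cover C).s e = x → e ∈ Q.sliceArrows C S

/-- `x` is a strict sink of the slice `S`: `x ∈ S₀`, no arrow of `ℤ(Q,C)` starting at `x`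
belongs to (the arrows of) `S`, and every arrow of `ℤ(Q,C)` ending at `x` belongs to `S`. -/
noncomputable def SliceStrictSink (C : Set Q.A) (S : Set (Q.V × ℤ)) (x : Q.V × ℤ) : Prop :=
  x ∈ S ∧ (∀ e : Q.A × ℤ, (Q.cover C).s e = x → e ∉ Q.sliceArrows C S) ∧
    ∀ e : Q.A × ℤ, (Q.cover C).t e = x → e ∈ Q.sliceArrows C S

/-- The slice-mutation `μ⁺ₓ(S)`: the full subquiver on `(S₀ \ {x}) ∪ {τ⁻¹x}`. -/
def sMutPlus (S : Set (Q.V × ℤ)) (x : Q.V × ℤ) : Set (Q.V × ℤ) :=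
  insert (x.1, x.2 - 1) (S \ {x})

/-- The slice-mutation `μ⁻ₓ(S)`: the full subquiver on `(S₀ \ {x}) ∪ {τx}`. -/
def sMutMinus (S : Set (Q.V × ℤ)) (x : Q.V × ℤ) : Set (Q.V × ℤ) :=
  insert (x.1, x.2 + 1) (S \ {x})

end PreQuiver

/-!
A slice `S` of `ℤ(Q,C)` is the graph of a height function `f : Q₀ → ℤ`, and the slice condition
says that `f (t a) - f (s a) + g_C(a)` is `0` or `1` for every arrow `a`, the value `0` meaning
that the lift of `a` starting in `S` lies in `S`. For `x = (v, f v)` a strict source this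
quantity is `1` on the arrows into `v` and `0` on the arrows out of `v`. The mutation `μ⁺ₓ`
replaces `f v` by `f v - 1`, which lowers the quantity by one on arrows into `v` and raises it
by one on arrows out of `v`: it stays in `{0, 1}`, and now `v` is a strict sink. Mutating back
restores `f`. The case of a strict sink is symmetric.
-/

namespace PreQuiver

variable {Q : PreQuiver} {C : Set Q.A}

lemma cover_s_mem_graph {f : Q.V → ℤ} {e : Q.A × ℤ} :
    (Q.cover C).s e ∈ Function.graph f ↔ f (Q.s e.1) = e.2 := Iff.rfl

lemma cover_t_mem_graph {f : Q.V → ℤ} {e : Q.A × ℤ} :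
    (Q.cover C).t e ∈ Function.graph f ↔ f (Q.t e.1) = e.2 - Q.gA C e.1 := Iff.rfl

lemma forall_cover_s_eq_iff {P : Q.A × ℤ → Prop} {x : Q.V × ℤ} :
    (∀ e, (Q.cover C).s e = x → P e) ↔ ∀ a, Q.s a = x.1 → P (a, x.2) := by
  refine ⟨fun h a ha => h _ (Prod.ext ha rfl), fun h e he => ?_⟩
  subst he
  exact h e.1 rfl

lemma forall_cover_t_eq_iff {P : Q.A × ℤ → Prop} {x : Q.V × ℤ} :
    (∀ e, (Q.cover C).t e = x → P e) ↔ ∀ a, Q.t a = x.1 → P (a, x.2 + Q.gA C a) := by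
  refine ⟨fun h a ha => h _ (Prod.ext ha (add_sub_cancel_right x.2 _)), fun h ⟨a, k⟩ he => ?_⟩
  subst he
  simpa only [cover, sub_add_cancel] using h a rfl

variable (C) in
/-- The arrow `(a, f (s a))` of `ℤ(Q,C)` ends at `(t a, f (t a) - heightDiff C f a)`: it is an
arrow of `Function.graph f` iff this is `0`, and `Function.graph f` is a slice iff it is always
`0` or `1`. -/
noncomputable def heightDiff (f : Q.V → ℤ) (a : Q.A) : ℤ := f (Q.t a) - f (Q.s a) + Q.gA C a

lemma exists_eq_graph_of_isSlice {S : Set (Q.V × ℤ)} (hS : Q.IsSlice C S) :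
    ∃ f : Q.V → ℤ, S = Function.graph f := by
  choose f hf huniq using hS.1
  refine ⟨f, Set.ext fun ⟨w, ℓ⟩ => ⟨fun h => (huniq w ℓ h).symm, ?_⟩⟩
  rintro rfl
  exact hf w

lemma isSlice_graph_iff {f : Q.V → ℤ} :
    Q.IsSlice C (Function.graph f) ↔ ∀ a, heightDiff C f a = 0 ∨ heightDiff C f a = 1 := by
  simp only [IsSlice, heightDiff, cover_s_mem_graph, cover_t_mem_graph, Function.mem_graph]
  dsimp only [cover]
  refine ⟨fun h a => ?_, fun h => ⟨fun w => ⟨f w, rfl, fun _ h => h.symm⟩, fun e he => ?_⟩⟩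
  · have := h.2 (a, f (Q.s a)) rfl
    dsimp only at this
    omega
  · have := h e.1
    omega

lemma mem_sliceArrows_graph {f : Q.V → ℤ} {e : Q.A × ℤ} :
    e ∈ Q.sliceArrows C (Function.graph f) ↔ f (Q.s e.1) = e.2 ∧ heightDiff C f e.1 = 0 := by
  simp only [sliceArrows, heightDiff, Set.mem_ofPred_eq, cover_s_mem_graph, cover_t_mem_graph]
  omega

lemma sliceStrictSource_graph_iff {f : Q.V → ℤ} {v : Q.V} :
    Q.SliceStrictSource C (Function.graph f) (v, f v) ↔
      (∀ a, Q.t a = v → heightDiff C f a ≠ 0) ∧ ∀ a, Q.s a = v → heightDiff C f a = 0 := by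
  refine (and_iff_right rfl).trans (and_congr (forall_cover_t_eq_iff.trans ?_)
    (forall_cover_s_eq_iff.trans ?_)) <;>
  refine forall₂_congr fun a (ha : _ = v) => ?_ <;>
  grind [mem_sliceArrows_graph, heightDiff]

lemma sliceStrictSink_graph_iff {f : Q.V → ℤ} {v : Q.V} :
    Q.SliceStrictSink C (Function.graph f) (v, f v) ↔
      (∀ a, Q.s a = v → heightDiff C f a ≠ 0) ∧ ∀ a, Q.t a = v → heightDiff C f a = 0 := by
  refine (and_iff_right rfl).trans (and_congr (forall_cover_s_eq_iff.trans ?_)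
    (forall_cover_t_eq_iff.trans ?_)) <;>
  refine forall₂_congr fun a (ha : _ = v) => ?_ <;>
  grind [mem_sliceArrows_graph, heightDiff]

lemma insert_graph_diff [DecidableEq Q.V] (f : Q.V → ℤ) (v : Q.V) (n : ℤ) :
    insert (v, n) (Function.graph f \ {(v, f v)}) = Function.graph (Function.update f v n) := by
  ext ⟨w, ℓ⟩
  by_cases hw : w = v
  · subst hw
    simp only [Set.mem_insert_iff, Prod.mk.injEq, true_and, Set.mem_sdiff, Function.mem_graph,
      Set.mem_singleton_iff, Function.update_self]
    omega
  · simp [hw]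

lemma heightDiff_update [DecidableEq Q.V] (f : Q.V → ℤ) (v : Q.V) (n : ℤ) (a : Q.A) :
    heightDiff C (Function.update f v n) a = heightDiff C f a
      + (if Q.t a = v then n - f v else 0) - (if Q.s a = v then n - f v else 0) := by
  grind [heightDiff, Function.update_apply]

lemma sMutMinus_sMutPlus_graph [DecidableEq Q.V] (f : Q.V → ℤ) (v : Q.V) :
    Q.sMutMinus (Q.sMutPlus (Function.graph f) (v, f v)) (v, f v - 1) = Function.graph f := by
  rw [sMutPlus, insert_graph_diff]
  conv in (v, f v - 1) => rw [← Function.update_self v (f v - 1) f]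
  rw [sMutMinus, insert_graph_diff, Function.update_idem, Function.update_self, sub_add_cancel,
    Function.update_eq_self]

lemma sMutPlus_sMutMinus_graph [DecidableEq Q.V] (f : Q.V → ℤ) (v : Q.V) :
    Q.sMutPlus (Q.sMutMinus (Function.graph f) (v, f v)) (v, f v + 1) = Function.graph f := by
  rw [sMutMinus, insert_graph_diff]
  conv in (v, f v + 1) => rw [← Function.update_self v (f v + 1) f]
  rw [sMutPlus, insert_graph_diff, Function.update_idem, Function.update_self, add_sub_cancel_right,
    Function.update_eq_self]

lemma isSlice_and_sliceStrictSink_sMutPlus_graph [DecidableEq Q.V] {f : Q.V → ℤ} {v : Q.V}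
    (hf : Q.IsSlice C (Function.graph f)) (hv : Q.SliceStrictSource C (Function.graph f) (v, f v)) :
    Q.IsSlice C (Q.sMutPlus (Function.graph f) (v, f v)) ∧
      Q.SliceStrictSink C (Q.sMutPlus (Function.graph f) (v, f v)) (v, f v - 1) := by
  rw [sMutPlus, insert_graph_diff]
  conv in (v, f v - 1) => rw [← Function.update_self v (f v - 1) f]
  -- The update leaves `heightDiff` unchanged on a loop at `v`, but `hv` rules such loops out.
  rw [isSlice_graph_iff] at hf ⊢
  rw [sliceStrictSource_graph_iff] at hv
  rw [sliceStrictSink_graph_iff]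
  refine ⟨fun a => ?_, fun a ha => ?_, fun a ha => ?_⟩ <;> rw [heightDiff_update] <;> grind

lemma isSlice_and_sliceStrictSource_sMutMinus_graph [DecidableEq Q.V] {f : Q.V → ℤ} {v : Q.V}
    (hf : Q.IsSlice C (Function.graph f)) (hv : Q.SliceStrictSink C (Function.graph f) (v, f v)) :
    Q.IsSlice C (Q.sMutMinus (Function.graph f) (v, f v)) ∧
      Q.SliceStrictSource C (Q.sMutMinus (Function.graph f) (v, f v)) (v, f v + 1) := by
  rw [sMutMinus, insert_graph_diff]
  conv in (v, f v + 1) => rw [← Function.update_self v (f v + 1) f]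
  rw [isSlice_graph_iff] at hf ⊢
  rw [sliceStrictSink_graph_iff] at hv
  rw [sliceStrictSource_graph_iff]
  refine ⟨fun a => ?_, fun a ha => ?_, fun a ha => ?_⟩ <;> rw [heightDiff_update] <;> grind

end PreQuiver

theorem stmt_6_general (Q : PreQuiver) (C : Set Q.A)
    (S : Set (Q.V × ℤ)) (hS : Q.IsSlice C S) (x : Q.V × ℤ) :
    (Q.SliceStrictSource C S x →
      Q.IsSlice C (Q.sMutPlus S x) ∧
      Q.SliceStrictSink C (Q.sMutPlus S x) (x.1, x.2 - 1) ∧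
      Q.sMutMinus (Q.sMutPlus S x) (x.1, x.2 - 1) = S) ∧
    (Q.SliceStrictSink C S x →
      Q.IsSlice C (Q.sMutMinus S x) ∧
      Q.SliceStrictSource C (Q.sMutMinus S x) (x.1, x.2 + 1) ∧
      Q.sMutPlus (Q.sMutMinus S x) (x.1, x.2 + 1) = S) := by
  classical
  obtain ⟨f, rfl⟩ := PreQuiver.exists_eq_graph_of_isSlice hS
  obtain ⟨v, m⟩ := x
  refine ⟨fun hx => ?_, fun hx => ?_⟩ <;>
  obtain rfl : f v = m := hx.1
  · exact and_assoc.mp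
      ⟨PreQuiver.isSlice_and_sliceStrictSink_sMutPlus_graph hS hx, PreQuiver.sMutMinus_sMutPlus_graph f v⟩
  · exact and_assoc.mp
      ⟨PreQuiver.isSlice_and_sliceStrictSource_sMutMinus_graph hS hx, PreQuiver.sMutPlus_sMutMinus_graph f v⟩

/-- Let `S` be a slice of `ℤ(Q,C)`.  If `x` is a strict source of `S`, then
`μ⁺ₓ(S)` is again a slice, `τ⁻¹x` is a strict sink of `μ⁺ₓ(S)`, and
`μ⁻_{τ⁻¹x}(μ⁺ₓ(S)) = S`.  Dually, if `x` is a strict sink of `S`, then `μ⁻ₓ(S)` is again a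
slice, `τx` is a strict source of `μ⁻ₓ(S)`, and `μ⁺_{τx}(μ⁻ₓ(S)) = S`. -/
theorem stmt_6 (Q : PreQuiver) [Finite Q.V] [Finite Q.A] (C : Set Q.A)
    (S : Set (Q.V × ℤ)) (hS : Q.IsSlice C S) (x : Q.V × ℤ) :
    (Q.SliceStrictSource C S x →
      Q.IsSlice C (Q.sMutPlus S x) ∧
      Q.SliceStrictSink C (Q.sMutPlus S x) (x.1, x.2 - 1) ∧
      Q.sMutMinus (Q.sMutPlus S x) (x.1, x.2 - 1) = S) ∧
    (Q.SliceStrictSink C S x →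
      Q.IsSlice C (Q.sMutMinus S x) ∧
      Q.SliceStrictSource C (Q.sMutMinus S x) (x.1, x.2 + 1) ∧
      Q.sMutPlus (Q.sMutMinus S x) (x.1, x.2 + 1) = S) :=
  stmt_6_general Q C S hS x
end

section
/- Let 𝒞 be a pretriangulated category with shift functor [1], let U and V be objects of 𝒞 with U ≅ U[2] and V ≅ V[2], and let X → V' →^f U → X[1] be a distinguished triangle in which f: V' → U is a minimal right (add V)-approximation of U. Then X ≅ X[2]. -/
open CategoryTheory CategoryTheory.Limits CategoryTheory.Pretriangulated

universe v u

variable {C : Type u} [Category.{v} C]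

/-- `X` belongs to `add V`: `X` is a direct summand of a finite direct sum of copies of `V`. -/
def InAdd [Preadditive C] [HasFiniteBiproducts C] (V X : C) : Prop :=
  ∃ (n : ℕ) (i : X ⟶ ⨁ (fun _ : Fin n => V)) (p : (⨁ fun _ : Fin n => V) ⟶ X),
    i ≫ p = 𝟙 X

/-- `f : V' → U` is a right `(add V)`-approximation of `U`: `V' ∈ add V` and every morphism
`W → U` with `W ∈ add V` factors through `f`. -/
def IsRightAddApprox [Preadditive C] [HasFiniteBiproducts C] (V : C) {V' U : C}
    (f : V' ⟶ U) : Prop :=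
  InAdd V V' ∧ ∀ (W : C), InAdd V W → ∀ g : W ⟶ U, ∃ h : W ⟶ V', h ≫ f = g

/-- `f` is right minimal: every endomorphism `φ` of its source with `φ ≫ f = f` is an
isomorphism. -/
def RightMinimal {V' U : C} (f : V' ⟶ U) : Prop :=
  ∀ φ : V' ⟶ V', φ ≫ f = f → IsIso φ

/-!
Shifting by `2` is an additive autoequivalence fixing `U` and `V` up to isomorphism, so it turns
`f` into another minimal right `(add V)`-approximation `V'⟦2⟧ ⟶ U`. Minimal approximations are
unique up to isomorphism over `U`, and distinguished triangles on isomorphic morphisms have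
isomorphic first terms, whence `X ≅ X⟦2⟧`.
-/

lemma RightMinimal.map {D : Type*} [Category D] (F : C ⥤ D) [F.Full] [F.Faithful]
    {V' U : C} {U' : D} (e : F.obj U ≅ U') {f : V' ⟶ U} (hf : RightMinimal f) :
    RightMinimal (F.map f ≫ e.hom) := by
  intro φ hφ
  have hφ' : F.preimage φ ≫ f = f :=
    F.map_injective (by simpa using (cancel_mono e.hom).1 (by simpa using hφ))
  have := hf _ hφ'
  simpa using (inferInstance : IsIso (F.map (F.preimage φ)))

section Approximations

variable [Preadditive C] [HasFiniteBiproducts C]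

lemma InAdd.map {D : Type*} [Category D] [Preadditive D] [HasFiniteBiproducts D]
    (F : C ⥤ D) [F.Additive] {V W : C} (h : InAdd V W) : InAdd (F.obj V) (F.obj W) := by
  obtain ⟨n, i, p, hip⟩ := h
  refine ⟨n, F.map i ≫ (F.mapBiproduct _).hom, (F.mapBiproduct _).inv ≫ F.map p, ?_⟩
  simp only [Category.assoc, Iso.hom_inv_id_assoc, ← F.map_comp, hip, F.map_id]

lemma InAdd.of_iso_left {V V' W : C} (e : V ≅ V') (h : InAdd V W) : InAdd V' W := by
  obtain ⟨n, i, p, hip⟩ := h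
  let e' : (⨁ fun _ : Fin n => V) ≅ ⨁ fun _ : Fin n => V' := biproduct.mapIso fun _ => e
  exact ⟨n, i ≫ e'.hom, e'.inv ≫ p, by simp [hip]⟩

lemma IsRightAddApprox.map (F : C ⥤ C) [F.IsEquivalence] [F.Additive] {V V' U U' : C}
    (eV : F.obj V ≅ V) (e : F.obj U ≅ U') {f : V' ⟶ U}
    (hf : IsRightAddApprox V f) : IsRightAddApprox V (F.map f ≫ e.hom) := by
  let E := F.asEquivalence
  have : E.functor.Additive := ‹F.Additive›
  refine ⟨(hf.1.map F).of_iso_left eV, fun W hW g => ?_⟩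
  -- `W ≅ F (F⁻¹ W)` with `F⁻¹ W ∈ add V`, so `g` comes from a map `F⁻¹ W ⟶ U`.
  have hW' : InAdd V (E.inverse.obj W) :=
    (hW.map E.inverse).of_iso_left (E.inverse.mapIso eV.symm ≪≫ (E.unitIso.app V).symm)
  let c : F.obj (E.inverse.obj W) ≅ W := E.counitIso.app W
  obtain ⟨k, hk⟩ := hf.2 _ hW' (F.preimage (c.hom ≫ g ≫ e.inv))
  refine ⟨c.inv ≫ F.map k, ?_⟩
  rw [Category.assoc, ← F.map_comp_assoc, hk, F.map_preimage]
  simp only [Category.assoc, Iso.inv_hom_id_assoc, Iso.inv_hom_id, Category.comp_id]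

lemma IsRightAddApprox.exists_iso_of_rightMinimal {V V₁ V₂ U : C} {f₁ : V₁ ⟶ U} {f₂ : V₂ ⟶ U}
    (hf₁ : IsRightAddApprox V f₁) (hm₁ : RightMinimal f₁)
    (hf₂ : IsRightAddApprox V f₂) (hm₂ : RightMinimal f₂) :
    ∃ a : V₁ ≅ V₂, a.hom ≫ f₂ = f₁ := by
  obtain ⟨a, ha⟩ := hf₂.2 V₁ hf₁.1 f₁
  obtain ⟨b, hb⟩ := hf₁.2 V₂ hf₂.1 f₂
  have : IsIso (a ≫ b) := hm₁ _ (by rw [Category.assoc, hb, ha])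
  have : IsIso (b ≫ a) := hm₂ _ (by rw [Category.assoc, ha, hb])
  have : Mono a := mono_of_mono a b
  have : IsSplitEpi a := IsSplitEpi.mk' ⟨inv (b ≫ a) ≫ b, by simp⟩
  have : IsIso a := isIso_of_mono_of_isSplitEpi a
  exact ⟨asIso a, ha⟩

end Approximations

noncomputable def CategoryTheory.Pretriangulated.obj₁IsoOfIso₂₃ [Preadditive C] [HasZeroObject C]
    [HasShift C ℤ] [∀ n : ℤ, (shiftFunctor C n).Additive] [Pretriangulated C]
    (T₁ T₂ : Triangle C) (hT₁ : T₁ ∈ distTriang C) (hT₂ : T₂ ∈ distTriang C)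
    (e₂ : T₁.obj₂ ≅ T₂.obj₂) (e₃ : T₁.obj₃ ≅ T₂.obj₃)
    (comm : T₁.mor₂ ≫ e₃.hom = e₂.hom ≫ T₂.mor₂) : T₁.obj₁ ≅ T₂.obj₁ :=
  (shiftFunctor C (1 : ℤ)).preimageIso <| Triangle.π₃.mapIso <|
    isoTriangleOfIso₁₂ _ _ (rot_of_distTriang _ hT₁) (rot_of_distTriang _ hT₂) e₂ e₃ comm

/-- Let `𝒞` be a pretriangulated category, `U ≅ U[2]`, `V ≅ V[2]`, and let
`X ⟶ V' ⟶ U ⟶ X[1]` be a distinguished triangle in which `f : V' ⟶ U` is a minimal right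
`(add V)`-approximation of `U`.  Then `X ≅ X[2]`. -/
theorem stmt_15 {C : Type u} [Category.{v} C] [Preadditive C] [HasZeroObject C]
    [HasShift C ℤ] [∀ n : ℤ, (shiftFunctor C n).Additive] [Pretriangulated C]
    [HasFiniteBiproducts C]
    (U V X V' : C) (hU : Nonempty (U ≅ U⟦(2 : ℤ)⟧)) (hV : Nonempty (V ≅ V⟦(2 : ℤ)⟧))
    (g : X ⟶ V') (f : V' ⟶ U) (h : U ⟶ X⟦(1 : ℤ)⟧)
    (htri : Triangle.mk g f h ∈ distTriang C)
    (happrox : IsRightAddApprox V f) (hmin : RightMinimal f) :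
    Nonempty (X ≅ X⟦(2 : ℤ)⟧) := by
  obtain ⟨e⟩ := hU
  obtain ⟨eV⟩ := hV
  have happrox₂ : IsRightAddApprox V (f⟦(2 : ℤ)⟧' ≫ e.inv) :=
    happrox.map (shiftFunctor C (2 : ℤ)) eV.symm e.symm
  have hmin₂ : RightMinimal (f⟦(2 : ℤ)⟧' ≫ e.inv) := hmin.map (shiftFunctor C (2 : ℤ)) e.symm
  obtain ⟨a, ha⟩ := happrox.exists_iso_of_rightMinimal hmin happrox₂ hmin₂
  have comm : f ≫ e.hom = a.hom ≫ ((2 : ℤ).negOnePow • f⟦(2 : ℤ)⟧') := by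
    rw [Int.negOnePow_even 2 even_two, one_smul, ← cancel_mono e.inv]
    simpa using ha.symm
  exact ⟨obj₁IsoOfIso₂₃ _ _ htri (Triangle.shift_distinguished _ htri 2) a e comm⟩
end
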